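/- arXiv:math/0512548 — 5 statements merged into one kernel-verified Lean document; each statement's English description precedes it below -/
import Mathlib

section
/- The Delannoy numbers satisfy the explicit formula a(r,s) = ∑_{i=0}^{min(r,s)} (r choose i) * (s choose i) * 2^i for all natural numbers r, s. -/
/-!
Applying Pascal's rule to both binomials in `t r s i = C(r,i) C(s,i) 2^i` gives
`t (r+1) (s+1) (i+1) + t r s (i+1) = t r (s+1) (i+1) + t (r+1) s (i+1) + 2 t r s i`;
summed over `i`, this says that `∑ᵢ t r s i` satisfies the Delannoy recurrence. Since
`t r s i = 0` for `i > min r s`, all four sums may be taken over one common range.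
-/

/-- The Delannoy numbers, defined by the standard two-dimensional recurrence. -/
def delannoy : ℕ → ℕ → ℕ
  | 0, 0 => 1
  | 0, s + 1 => delannoy 0 s
  | r + 1, 0 => delannoy r 0
  | r + 1, s + 1 => delannoy r (s + 1) + delannoy (r + 1) s + delannoy r s

open Finset

namespace Delannoy

theorem delannoy_zero_left (s : ℕ) : delannoy 0 s = 1 := by
  induction s with
  | zero => rw [delannoy]
  | succ s ih => rwa [delannoy]

theorem delannoy_zero_right (r : ℕ) : delannoy r 0 = 1 := by
  induction r with
  | zero => rw [delannoy]
  | succ r ih => rwa [delannoy]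

theorem eq_delannoy_of_recurrence (f : ℕ → ℕ → ℕ) (hleft : ∀ s, f 0 s = 1)
    (hright : ∀ r, f r 0 = 1)
    (hrec : ∀ r s, f (r + 1) (s + 1) = f r (s + 1) + f (r + 1) s + f r s) (r s : ℕ) :
    f r s = delannoy r s := by
  induction r generalizing s with
  | zero => rw [hleft, delannoy_zero_left]
  | succ r ihr =>
    induction s with
    | zero => rw [hright, delannoy_zero_right]
    | succ s ihs => rw [hrec, ihr, ihs, ihr, delannoy]

def summand (r s i : ℕ) : ℕ := r.choose i * s.choose i * 2 ^ i

theorem summand_zero_right (r s : ℕ) : summand r s 0 = 1 := by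
  simp [summand]

theorem summand_eq_zero_of_min_lt {r s i : ℕ} (h : min r s < i) : summand r s i = 0 := by
  rcases min_lt_iff.mp h with hr | hs
  · simp [summand, Nat.choose_eq_zero_of_lt hr]
  · simp [summand, Nat.choose_eq_zero_of_lt hs]

theorem sum_range_summand_of_min_lt (r s : ℕ) {N : ℕ} (h : min r s < N) :
    ∑ i ∈ range N, summand r s i = ∑ i ∈ range (min r s + 1), summand r s i :=
  eventually_constant_sum (fun _ hi => summand_eq_zero_of_min_lt hi) h

theorem summand_succ_succ (r s i : ℕ) :
    summand (r + 1) (s + 1) (i + 1) + summand r s (i + 1) =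
      summand r (s + 1) (i + 1) + summand (r + 1) s (i + 1) + 2 * summand r s i := by
  simp only [summand, Nat.choose_succ_succ, pow_succ]
  ring

theorem sum_range_succ_summand_succ_succ (r s N : ℕ) :
    ∑ i ∈ range (N + 1), summand (r + 1) (s + 1) i + ∑ i ∈ range (N + 1), summand r s i =
      ∑ i ∈ range (N + 1), summand r (s + 1) i + ∑ i ∈ range (N + 1), summand (r + 1) s i +
        2 * ∑ i ∈ range N, summand r s i := by
  have hsum := sum_congr rfl fun i (_ : i ∈ range N) => summand_succ_succ r s i
  simp only [sum_add_distrib, ← mul_sum] at hsum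
  simp only [sum_range_succ', summand_zero_right]
  omega

def explicitSum (r s : ℕ) : ℕ := ∑ i ∈ range (min r s + 1), summand r s i

theorem explicitSum_zero_left (s : ℕ) : explicitSum 0 s = 1 := by
  simp [explicitSum, summand]

theorem explicitSum_zero_right (r : ℕ) : explicitSum r 0 = 1 := by
  simp [explicitSum, summand]

theorem explicitSum_succ_succ (r s : ℕ) :
    explicitSum (r + 1) (s + 1) =
      explicitSum r (s + 1) + explicitSum (r + 1) s + explicitSum r s := by
  have hrec := sum_range_succ_summand_succ_succ r s (r + s + 2)
  rw [sum_range_summand_of_min_lt (r + 1) (s + 1) (by omega),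
    sum_range_summand_of_min_lt r s (N := r + s + 2 + 1) (by omega),
    sum_range_summand_of_min_lt r (s + 1) (by omega),
    sum_range_summand_of_min_lt (r + 1) s (by omega),
    sum_range_summand_of_min_lt r s (N := r + s + 2) (by omega)] at hrec
  simp only [explicitSum]
  omega

end Delannoy

open Delannoy in
theorem delannoy_explicit (r s : ℕ) :
    delannoy r s =
      ∑ i ∈ Finset.range (min r s + 1), r.choose i * s.choose i * 2 ^ i :=
  (eq_delannoy_of_recurrence explicitSum explicitSum_zero_left explicitSum_zero_right
    explicitSum_succ_succ r s).symm
end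

section
/- For real r, s > 0, the point (x, y) = ((√(r² + s²) − s)/r, (√(r² + s²) − r)/s) satisfies both 1 − x − y − x·y = 0 and s·x·(1 + y) = r·y·(1 + x), and moreover 0 < x < 1 and 0 < y < 1. -/
theorem delannoy_critical_point (r s : ℝ) (hr : 0 < r) (hs : 0 < s) :
    let x := (Real.sqrt (r ^ 2 + s ^ 2) - s) / r
    let y := (Real.sqrt (r ^ 2 + s ^ 2) - r) / s
    1 - x - y - x * y = 0 ∧ s * x * (1 + y) = r * y * (1 + x) ∧
      0 < x ∧ x < 1 ∧ 0 < y ∧ y < 1 := by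
  intro x y
  set q := Real.sqrt (r ^ 2 + s ^ 2) with hq
  have hq2 : q ^ 2 = r ^ 2 + s ^ 2 := Real.sq_sqrt (by positivity)
  have hq0 : 0 < q := Real.sqrt_pos.mpr (by positivity)
  have hqs : s < q := by nlinarith
  have hqr : r < q := by nlinarith
  have hqrs : q < r + s := by nlinarith
  have hx : x = (q - s) / r := rfl
  have hy : y = (q - r) / s := rfl
  refine ⟨?_, ?_, ?_, ?_, ?_, ?_⟩
  · rw [hx, hy]; field_simp; nlinarith
  · rw [hx, hy]; field_simp; linear_combination (s - r) * hq2
  · rw [hx]; exact div_pos (by linarith) hr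
  · rw [hx, div_lt_one hr]; linarith
  · rw [hy]; exact div_pos (by linarith) hs
  · rw [hy, div_lt_one hs]; linarith
end

section
/- Let n, t, k be natural numbers and suppose we are given t pairwise disjoint 2-element subsets P₁,…,P_t of {1,…,n}. The number of k-element subsets S of {1,…,n} that contain none of the pairs P_i (i.e., P_i ⊄ S for all i) equals ∑_{i=0}^{t} (−1)^i · (t choose i) · (n − 2i choose k − 2i), where binomial coefficients (p choose q) are taken to be 0 unless 0 ≤ q ≤ p. -/
/-- Binomial coefficient with integer arguments, with the convention that
`zchoose p q = 0` unless `0 ≤ q ≤ p`. -/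
def zchoose (p q : ℤ) : ℤ :=
  if 0 ≤ q ∧ q ≤ p then (p.toNat.choose q.toNat : ℤ) else 0

open Finset

/-- The number of `k`-element supersets of a fixed set `B` inside `Fin n`. -/
lemma card_supersets {n : ℕ} (B : Finset (Fin n)) (k : ℕ) :
    #((univ : Finset (Finset (Fin n))).filter fun X => B ⊆ X ∧ #X = k) =
      if #B ≤ k then (n - #B).choose (k - #B) else 0 := by
  split_ifs with h
  · have hcompl : #(Bᶜ) = n - #B := by
      rw [card_compl]; simp
    rw [← hcompl, ← Finset.card_powersetCard]
    apply Finset.card_bij (fun X _ => X \ B)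
    · intro X hX
      simp only [mem_filter, mem_univ, true_and] at hX
      rw [mem_powersetCard]
      constructor
      · intro a ha
        simp only [mem_sdiff] at ha
        simp [ha.2]
      · rw [card_sdiff_of_subset hX.1, hX.2]
    · intro X₁ h₁ X₂ h₂ he
      simp only [mem_filter, mem_univ, true_and] at h₁ h₂
      rw [← Finset.sdiff_union_of_subset h₁.1, ← Finset.sdiff_union_of_subset h₂.1, he]
    · intro Y hY
      rw [mem_powersetCard] at hY
      have hd : Disjoint Y B := by
        intro Z hZY hZB a ha
        have := hY.1 (hZY ha)
        simp only [Finset.mem_compl] at this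
        exact absurd (hZB ha) this
      refine ⟨Y ∪ B, ?_, ?_⟩
      · simp only [mem_filter, mem_univ, true_and]
        refine ⟨Finset.subset_union_right, ?_⟩
        rw [Finset.card_union_of_disjoint hd, hY.2]
        omega
      · rw [Finset.union_sdiff_right, Finset.sdiff_eq_self_of_disjoint hd]
  · rw [Finset.card_eq_zero, Finset.filter_eq_empty_iff]
    rintro X - ⟨hBX, hXk⟩
    exact h (hXk ▸ Finset.card_le_card hBX)

lemma ite_choose_eq_zchoose {n k m : ℕ} (hmn : 2 * m ≤ n) :
    (if 2 * m ≤ k then ((n - 2 * m).choose (k - 2 * m) : ℤ) else 0) =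
      zchoose ((n : ℤ) - 2 * m) ((k : ℤ) - 2 * m) := by
  unfold zchoose
  by_cases h1 : 2 * m ≤ k
  · by_cases h2 : k ≤ n
    · rw [if_pos h1, if_pos ⟨by omega, by omega⟩]
      congr 2 <;> omega
    · rw [if_pos h1, if_neg (by omega)]
      rw [Nat.choose_eq_zero_of_lt (by omega)]
      simp
  · rw [if_neg h1, if_neg (by omega)]

theorem avoid_pairs_count (n t k : ℕ) (P : Fin t → Finset (Fin n))
    (hcard : ∀ i, (P i).card = 2)
    (hdisj : ∀ i j, i ≠ j → Disjoint (P i) (P j)) :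
    (Nat.card {S : Finset (Fin n) // S.card = k ∧ ∀ i, ¬ P i ⊆ S} : ℤ) =
      ∑ i ∈ Finset.range (t + 1),
        (-1 : ℤ) ^ i * (t.choose i : ℤ) *
          zchoose ((n : ℤ) - 2 * i) ((k : ℤ) - 2 * i) := by
  classical
  -- cardinality of a union of pairs indexed by `T`
  have hB : ∀ T : Finset (Fin t), #(T.biUnion P) = 2 * #T := by
    intro T
    rw [Finset.card_biUnion (fun i _ j _ hij => hdisj i j hij)]
    simp [hcard, mul_comm]
  have h2t : 2 * t ≤ n := by
    have := hB univ
    have hle : #((univ : Finset (Fin t)).biUnion P) ≤ n := by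
      simpa using Finset.card_le_univ ((univ : Finset (Fin t)).biUnion P)
    simp only [Finset.card_univ, Fintype.card_fin] at this
    omega
  set S : Fin t → Finset (Finset (Fin n)) := fun i => univ.filter (fun X => P i ⊆ X) with hS
  have key := Finset.inclusion_exclusion_sum_inf_compl (univ : Finset (Fin t)) S
      (fun X => if #X = k then (1 : ℤ) else 0)
  -- rewrite LHS of key
  have hmemS : ∀ i (X : Finset (Fin n)), X ∈ S i ↔ P i ⊆ X := by
    intro i X; simp [hS]
  have hLHS : (∑ X ∈ (univ : Finset (Fin t)).inf fun i => (S i)ᶜ,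
      if #X = k then (1 : ℤ) else 0) =
      (Nat.card {S : Finset (Fin n) // S.card = k ∧ ∀ i, ¬ P i ⊆ S} : ℤ) := by
    rw [Finset.sum_boole]
    rw [Nat.card_eq_fintype_card, Fintype.card_subtype]
    congr 1
    apply Finset.card_nbij id
    · intro X hX
      simp only [Finset.mem_filter, Finset.mem_inf, Finset.mem_compl, hmemS,
        Finset.mem_univ, true_and, id, Finset.mem_coe] at hX ⊢
      exact ⟨hX.2, fun i => hX.1 i trivial⟩
    · intro X₁ _ X₂ _ h; exact h
    · intro X hX
      simp only [Finset.coe_filter, Finset.mem_univ, true_and, Set.mem_setOf_eq,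
        Set.mem_image, Finset.mem_coe, Finset.mem_filter, Finset.mem_inf,
        Finset.mem_compl, hmemS, id] at hX ⊢
      exact ⟨X, ⟨fun i _ => hX.2 i, hX.1⟩, rfl⟩
  -- rewrite the summand of RHS of key
  have hRHS : ∀ T : Finset (Fin t), (∑ X ∈ T.inf S, if #X = k then (1 : ℤ) else 0) =
      (if 2 * #T ≤ k then ((n - 2 * #T).choose (k - 2 * #T) : ℤ) else 0) := by
    intro T
    rw [Finset.sum_boole]
    have : Finset.filter (fun X => #X = k) (T.inf S) =
        (univ : Finset (Finset (Fin n))).filter fun X => T.biUnion P ⊆ X ∧ #X = k := by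
      ext X
      simp only [Finset.mem_filter, Finset.mem_inf, hmemS, Finset.mem_univ, true_and,
        Finset.biUnion_subset]
    rw [this, card_supersets, hB]
    split_ifs with h
    · ring_nf
    · simp
  rw [hLHS] at key
  rw [key]
  have : ∀ T ∈ (univ : Finset (Fin t)).powerset,
      ((-1 : ℤ) ^ #T • ∑ X ∈ T.inf S, if #X = k then (1 : ℤ) else 0) =
      (fun m => (-1 : ℤ) ^ m *
        if 2 * m ≤ k then ((n - 2 * m).choose (k - 2 * m) : ℤ) else 0) #T := by
    intro T _
    rw [hRHS]; simp [smul_eq_mul]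
  rw [Finset.sum_congr rfl this,
    Finset.sum_powerset_apply_card (x := (univ : Finset (Fin t)))
      (f := fun m => (-1 : ℤ) ^ m *
        if 2 * m ≤ k then ((n - 2 * m).choose (k - 2 * m) : ℤ) else 0)]
  simp only [Finset.card_univ, Fintype.card_fin]
  apply Finset.sum_congr rfl
  intro m hm
  rw [Finset.mem_range] at hm
  rw [ite_choose_eq_zchoose (by omega)]
  ring
end

section
/- With the convention (p choose q) = 0 unless 0 ≤ q ≤ p, the signed sum a(n,k,t) := ∑_{i=0}^{t} (−1)^i (t choose i)(n−2i choose k−2i) equals 0 whenever k + t > n and 2t ≤ n. -/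
/-!
The summand `zchoose (n - 2i) (k - 2i)` is the coefficient of `X^k` in `X^(2i) (1 + X)^(n - 2i)`,
so by the binomial theorem the whole sum is the coefficient of `X^k` in
`(1 + X)^(n - 2t) ((1 + X)^2 - X^2)^t = (1 + X)^(n - 2t) (1 + 2X)^t`,
a polynomial of degree `n - t < k`.
-/

open Polynomial Finset

theorem zchoose_natCast_sub_eq_coeff {n m : ℕ} (k : ℕ) (h : m ≤ n) :
    zchoose ((n : ℤ) - m) ((k : ℤ) - m) = (X ^ m * (1 + X : ℤ[X]) ^ (n - m)).coeff k := by
  rw [coeff_X_pow_mul', zchoose]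
  split_ifs with hz hk hk
  · rw [coeff_one_add_X_pow]
    congr 2 <;> omega
  · omega
  · rw [coeff_one_add_X_pow, Nat.choose_eq_zero_of_lt (by omega), Nat.cast_zero]
  · rfl

theorem sum_alternating_choose_smul_pow_mul_pow {R : Type*} [CommRing R] (x y : R) {n t : ℕ}
    (h : 2 * t ≤ n) :
    ∑ i ∈ range (t + 1), ((-1) ^ i * t.choose i : ℤ) • (y ^ (2 * i) * x ^ (n - 2 * i)) =
      x ^ (n - 2 * t) * (x ^ 2 - y ^ 2) ^ t := by
  rw [sub_eq_neg_add, add_pow, mul_sum]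
  refine sum_congr rfl fun i hi => ?_
  have hx : x ^ (n - 2 * i) = x ^ (n - 2 * t) * (x ^ 2) ^ (t - i) := by
    rw [← pow_mul, ← pow_add]
    congr 1
    have := mem_range.1 hi
    omega
  rw [hx, pow_mul, neg_pow, zsmul_eq_mul]
  push_cast
  ring

theorem avoid_pairs_sum_vanishes (n k t : ℕ) (h : n < k + t) (h2t : 2 * t ≤ n) :
    (∑ i ∈ Finset.range (t + 1),
        (-1 : ℤ) ^ i * (t.choose i : ℤ) *
          zchoose ((n : ℤ) - 2 * i) ((k : ℤ) - 2 * i)) = 0 := by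
  have hsum : ∑ i ∈ range (t + 1),
        (-1 : ℤ) ^ i * (t.choose i : ℤ) * zchoose ((n : ℤ) - 2 * i) ((k : ℤ) - 2 * i) =
      (∑ i ∈ range (t + 1), ((-1) ^ i * t.choose i : ℤ) •
        (X ^ (2 * i) * (1 + X : ℤ[X]) ^ (n - 2 * i))).coeff k := by
    rw [finsetSum_coeff]
    refine sum_congr rfl fun i hi => ?_
    have hi : 2 * i ≤ n := by have := mem_range.1 hi; omega
    rw [coeff_smul, smul_eq_mul, ← zchoose_natCast_sub_eq_coeff k hi]
    push_cast
    rfl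
  have hdeg : ((1 + X : ℤ[X]) ^ (n - 2 * t) * (1 + 2 * X) ^ t).natDegree ≤ n - 2 * t + t := by
    compute_degree
  rw [hsum, sum_alternating_choose_smul_pow_mul_pow _ _ h2t,
    show (1 + X : ℤ[X]) ^ 2 - X ^ 2 = 1 + 2 * X by ring]
  exact coeff_eq_zero_of_natDegree_lt (hdeg.trans_lt (by omega))
end

section
/- Let r ≥ s ≥ 0 with r ≡ s (mod 2). The number of lattice paths from (0,0) to (r,s) with steps (1,1) and (1,−1) that never go below the horizontal axis equals ((s+1)/(r+1))·(r+1 choose (r−s)/2) = (2(s+1)/(r+s+2))·r!/(((r−s)/2)!·((r+s)/2)!). If r and s have opposite parities the count is 0. -/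
/-!
Deleting the last step shows that the number `N(r, s)` of such paths satisfies
`N(r + 1, s) = N(r, s - 1) + N(r, s + 1)` for `s ≥ 0`, with `N(r, -1) = 0`. The
reflection-principle value `C(r, u) - C(r, u + 1)`, where `u = (r + s) / 2` is the number of
up-steps, satisfies the same recurrence by Pascal's rule and vanishes at `s = -1` because
`C(2u + 1, u) = C(2u + 1, u + 1)`; so it equals `N(r, s)` by induction on `r`. Both closed forms
are rewritings of this difference of binomial coefficients.
-/

namespace Nat

theorem cast_choose_sub_cast_choose_succ {K : Type*} [Field K] [CharZero K] (a b : ℕ) :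
    ((a + b).choose a : K) - (a + b).choose (a + 1) =
      ((a : K) + 1 - b) / (a + 1) * (a + b).choose a := by
  have h := choose_succ_right_eq (a + b) a
  rw [add_tsub_cancel_left] at h
  have h' : ((a + b).choose (a + 1) : K) * (a + 1) = (a + b).choose a * b := by exact_mod_cast h
  field_simp
  linear_combination -h'

theorem cast_choose_add_succ {K : Type*} [Field K] [CharZero K] (a b : ℕ) :
    ((a + b + 1).choose b : K) = ((a : K) + b + 1) / (a + 1) * (a + b).choose a := by
  have h := choose_mul_succ_eq (a + b) b
  rw [show a + b + 1 - b = a + 1 by omega, ← choose_symm_add] at h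
  have h' : ((a + b).choose a : K) * (a + b + 1) = (a + b + 1).choose b * (a + 1) := by
    exact_mod_cast h
  field_simp
  linear_combination -h'

end Nat

section PrefixSums

variable {M : Type*} [AddCommMonoid M]

theorem sum_ite_val_lt_of_le {r j : ℕ} (w : Fin r → M) (hj : r ≤ j) :
    (∑ i : Fin r, if (i : ℕ) < j then w i else 0) = ∑ i, w i :=
  Finset.sum_congr rfl fun i _ => if_pos (i.isLt.trans_le hj)

theorem sum_ite_val_lt_snoc {r j : ℕ} (v : Fin r → M) (a : M) (hj : j ≤ r) :
    (∑ i : Fin (r + 1), if (i : ℕ) < j then Fin.snoc v a i else 0) =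
      ∑ i : Fin r, if (i : ℕ) < j then v i else 0 := by
  simp [Fin.sum_univ_castSucc, hj.not_gt]

end PrefixSums

def dyckPaths (r : ℕ) (s : ℤ) : Set (Fin r → ℤ) :=
  {w | (∀ i, w i = 1 ∨ w i = -1) ∧
    (∀ j : ℕ, j ≤ r → 0 ≤ ∑ i : Fin r, if (i : ℕ) < j then w i else 0) ∧
    ∑ i : Fin r, w i = s}

namespace dyckPaths

instance (r : ℕ) (s : ℤ) : Finite (dyckPaths r s) :=
  (Set.Finite.pi' fun _ => Set.toFinite {1, -1}).subset fun _ hw i => hw.1 i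

theorem nonneg {r : ℕ} {s : ℤ} {w : Fin r → ℤ} (hw : w ∈ dyckPaths r s) : 0 ≤ s := by
  simpa [← hw.2.2, sum_ite_val_lt_of_le w le_rfl] using hw.2.1 r le_rfl

theorem eq_empty_of_neg {r : ℕ} {s : ℤ} (hs : s < 0) : dyckPaths r s = ∅ :=
  Set.eq_empty_of_forall_notMem fun _ hw => (nonneg hw).not_gt hs

theorem emod_two_eq {r : ℕ} {s : ℤ} {w : Fin r → ℤ} (hw : w ∈ dyckPaths r s) :
    s % 2 = r % 2 := by
  have hodd : ∀ i, w i % 2 = 1 := fun i => by rcases hw.1 i with h | h <;> simp [h]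
  simp [← hw.2.2, Finset.sum_int_mod, hodd]

theorem ncard_zero (s : ℤ) : (dyckPaths 0 s).ncard = if s = 0 then 1 else 0 := by
  have h : dyckPaths 0 s = {_w | 0 = s} := by ext; simp [dyckPaths]
  rcases eq_or_ne s 0 with rfl | hs
  · simp [h, Set.ncard_univ]
  · simp [h, hs, Ne.symm hs]

theorem snoc_mem_iff {r : ℕ} {s : ℤ} (v : Fin r → ℤ) (a : ℤ) :
    Fin.snoc v a ∈ dyckPaths (r + 1) s ↔
      (a = 1 ∨ a = -1) ∧ v ∈ dyckPaths r (s - a) ∧ 0 ≤ s := by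
  simp only [dyckPaths, Set.mem_ofPred_eq, Fin.forall_fin_succ', Fin.snoc_castSucc, Fin.snoc_last,
    Nat.le_succ_iff, or_imp, forall_and, forall_eq, Fin.sum_snoc, sum_ite_val_lt_of_le _ le_rfl]
  constructor
  · rintro ⟨⟨hv, ha⟩, ⟨hprefix, hfull⟩, hsum⟩
    exact ⟨ha, ⟨hv, fun j hj => sum_ite_val_lt_snoc v a hj ▸ hprefix j hj, by omega⟩,
      hsum ▸ hfull⟩
  · rintro ⟨ha, ⟨hv, hprefix, hsum⟩, hs⟩
    exact ⟨⟨hv, ha⟩,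
      ⟨fun j hj => (sum_ite_val_lt_snoc v a hj).symm ▸ hprefix j hj, by omega⟩, by omega⟩

theorem eq_image_snoc_union_image_snoc {r : ℕ} {s : ℤ} (hs : 0 ≤ s) :
    dyckPaths (r + 1) s =
      (Fin.snoc · 1) '' dyckPaths r (s - 1) ∪ (Fin.snoc · (-1)) '' dyckPaths r (s + 1) := by
  ext w
  obtain ⟨v, a, rfl⟩ : ∃ v a, w = Fin.snoc v a :=
    ⟨Fin.init w, w (Fin.last r), (Fin.snoc_init_self w).symm⟩
  simp only [snoc_mem_iff, Set.mem_union, Set.mem_image, Fin.snoc_injective2.eq_iff]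
  aesop

theorem ncard_succ {r : ℕ} {s : ℤ} (hs : 0 ≤ s) :
    (dyckPaths (r + 1) s).ncard = (dyckPaths r (s - 1)).ncard + (dyckPaths r (s + 1)).ncard := by
  rw [eq_image_snoc_union_image_snoc hs, Set.ncard_union_eq,
    Set.ncard_image_of_injective _ (Fin.snoc_left_injective (α := fun _ => ℤ) _),
    Set.ncard_image_of_injective _ (Fin.snoc_left_injective (α := fun _ => ℤ) _)]
  rw [Set.disjoint_left]
  rintro _ ⟨v, -, rfl⟩ ⟨v', -, h⟩
  simpa using congrFun h (Fin.last r)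

theorem ncard_eq_choose_sub_choose (r u : ℕ) (h : r ≤ 2 * u + 1) :
    ((dyckPaths r (2 * u - r)).ncard : ℤ) = r.choose u - r.choose (u + 1) := by
  induction r generalizing u with
  | zero =>
    cases u with
    | zero => simp [ncard_zero]
    | succ u => simp [ncard_zero]; omega
  | succ r ih =>
    obtain hr | hr := eq_or_lt_of_le h
    · obtain rfl : r = 2 * u := by omega
      rw [eq_empty_of_neg (by push_cast; omega), Nat.choose_symm_half]
      simp
    obtain ⟨v, rfl⟩ : ∃ v, u = v + 1 := ⟨u - 1, by omega⟩
    rw [ncard_succ (by push_cast; omega), Nat.choose_succ_succ', Nat.choose_succ_succ']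
    have h₁ := ih v (by omega)
    have h₂ := ih (v + 1) (by omega)
    push_cast at h₁ h₂ ⊢
    rw [show 2 * ((v : ℤ) + 1) - (r + 1) - 1 = 2 * v - r by ring,
      show 2 * ((v : ℤ) + 1) - (r + 1) + 1 = 2 * (v + 1) - r by ring, h₁, h₂]
    ring

theorem ncard_eq_div_mul_choose (s k : ℕ) :
    ((dyckPaths (s + k + k) s).ncard : ℚ) =
      ((s : ℚ) + 1) / (s + k + 1) * (s + k + k).choose (s + k) := by
  have h := ncard_eq_choose_sub_choose (s + k + k) (s + k) (by omega)
  rw [show 2 * ((s + k : ℕ) : ℤ) - (s + k + k : ℕ) = s by push_cast; ring] at h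
  rw [← Int.cast_natCast, h, Int.cast_sub, Int.cast_natCast, Int.cast_natCast,
    Nat.cast_choose_sub_cast_choose_succ]
  push_cast
  ring

end dyckPaths

theorem dyck_path_count (r s : ℕ) (hsr : s ≤ r) :
    let T := {w : Fin r → ℤ //
      (∀ i, w i = 1 ∨ w i = -1) ∧
      (∀ j : ℕ, j ≤ r → 0 ≤ ∑ i : Fin r, if (i : ℕ) < j then w i else 0) ∧
      (∑ i : Fin r, w i = (s : ℤ))}
    (r % 2 = s % 2 →
      (Nat.card T : ℚ) =
          ((s : ℚ) + 1) / ((r : ℚ) + 1) * ((r + 1).choose ((r - s) / 2) : ℚ) ∧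
      (Nat.card T : ℚ) =
          2 * ((s : ℚ) + 1) / ((r : ℚ) + (s : ℚ) + 2) *
            ((r.factorial : ℚ) /
              ((((r - s) / 2).factorial : ℚ) * (((r + s) / 2).factorial : ℚ)))) ∧
    (r % 2 ≠ s % 2 → Nat.card T = 0) := by
  intro T
  have hT : Nat.card T = (dyckPaths r s).ncard := Nat.card_coe_set_eq _
  refine ⟨fun hpar => ?_, fun hpar => ?_⟩
  · obtain ⟨k, rfl⟩ : ∃ k, r = s + k + k := ⟨(r - s) / 2, by omega⟩
    rw [show (s + k + k - s) / 2 = k by omega, show (s + k + k + s) / 2 = s + k by omega, hT,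
      dyckPaths.ncard_eq_div_mul_choose, Nat.cast_choose_add_succ, Nat.cast_add_choose ℚ,
      mul_comm (k.factorial : ℚ)]
    push_cast
    constructor
    · field_simp
    · field_simp
      ring
  · rw [hT, Set.ncard_eq_zero]
    exact Set.eq_empty_of_forall_notMem fun _ hw =>
      hpar (by have := dyckPaths.emod_two_eq hw; omega)
end
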